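/- arXiv:0903.1188 — 4 statements merged into one kernel-verified Lean document; each statement's English description precedes it below -/
import Mathlib

section
/- Let 𝔤 be a weakly root graded Lie algebra with root decomposition 𝔤 = 𝔤₀ ⊕ ⊕_{α∈ℛ} 𝔤_α relative to a Cartan subalgebra 𝔥, with all 𝔤_α ≠ 0 for α ∈ ℛ, and let 𝔭 = 𝔤₀ + Σ_{α∈Σ} 𝔤_α be the parabolic subalgebra associated to a parabolic system Σ. Then the normalizer of 𝔭 in 𝔤 equals 𝔭. -/
/-!
The parabolic subalgebra `𝔭` and its normalizer are both stable under `ad 𝔥`, so each is spanned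
by its intersections with the weight spaces (weight components of an `ad 𝔥`-stable subspace stay
in it, by a Vandermonde-type induction). A weight vector `v` of weight `χ ≠ 0` normalizing `𝔭` lies
in `𝔭`, because `⁅v, h⁆ = -χ(h) • v` for `h ∈ 𝔥 ⊆ 𝔭`. Conversely `𝔭` normalizes itself: if
`χ, ψ ∈ Σ ∪ {0}` and `χ + ψ` is a weight, then `(χ + ψ)(x)` has nonnegative real part, so
`χ + ψ ∈ Σ ∪ {0}`; otherwise `𝔤_{χ+ψ} = 0`.
-/

def wtSpace {L : Type*} [LieRing L] [LieAlgebra ℂ L] (H : LieSubalgebra ℂ L)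
    (χ : Module.Dual ℂ H) : Submodule ℂ L where
  carrier := {y | ∀ h : H, ⁅(h : L), y⁆ = χ h • y}
  add_mem' := by
    intro a b ha hb h
    rw [lie_add, ha h, hb h, smul_add]
  zero_mem' := by intro h; simp
  smul_mem' := by
    intro c a ha h
    rw [lie_smul, ha h]
    exact smul_comm c (χ h) a

open Finset

section

variable {L : Type*} [LieRing L] [LieAlgebra ℂ L] {H : LieSubalgebra ℂ L}

def IsAdInvariant (H : LieSubalgebra ℂ L) (N : Submodule ℂ L) : Prop :=
  ∀ h : H, ∀ m ∈ N, ⁅(h : L), m⁆ ∈ N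

def lieNormalizer (P : Submodule ℂ L) : Submodule ℂ L where
  carrier := {z | ∀ p ∈ P, ⁅z, p⁆ ∈ P}
  add_mem' ha hb p hp := by rw [add_lie]; exact P.add_mem (ha p hp) (hb p hp)
  zero_mem' p _ := by rw [zero_lie]; exact P.zero_mem
  smul_mem' c _ ha p hp := by rw [smul_lie]; exact P.smul_mem c (ha p hp)

theorem lie_mem_wtSpace {χ ψ : Module.Dual ℂ H} {z w : L} (hz : z ∈ wtSpace H χ)
    (hw : w ∈ wtSpace H ψ) : ⁅z, w⁆ ∈ wtSpace H (χ + ψ) := fun h => by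
  rw [leibniz_lie, hz h, hw h, smul_lie, lie_smul, LinearMap.add_apply, add_smul]

theorem isAdInvariant_biSup_wtSpace (s : Finset (Module.Dual ℂ H)) :
    IsAdInvariant H (⨆ χ ∈ s, wtSpace H χ) := by
  intro h m hm
  obtain ⟨μ, rfl⟩ := (Submodule.mem_iSup_finset_iff_exists_sum _ _).mp hm
  rw [lie_sum]
  refine Submodule.sum_mem _ fun χ hχ => ?_
  rw [(μ χ).2 h]
  exact le_biSup (wtSpace H) hχ ((wtSpace H χ).smul_mem _ (μ χ).2)

theorem IsAdInvariant.lieNormalizer {N : Submodule ℂ L} (hN : IsAdInvariant H N) :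
    IsAdInvariant H (lieNormalizer N) := fun h m hm p hp => by
  rw [lie_lie]
  exact N.sub_mem (hN h _ (hm p hp)) (hm _ (hN h p hp))

theorem IsAdInvariant.forall_mem_of_sum_mem {N : Submodule ℂ L} (hN : IsAdInvariant H N)
    {s : Finset (Module.Dual ℂ H)} {v : Module.Dual ℂ H → L}
    (hv : ∀ χ ∈ s, v χ ∈ wtSpace H χ) (hsum : ∑ χ ∈ s, v χ ∈ N) : ∀ χ ∈ s, v χ ∈ N := by
  classical
  induction s using Finset.induction_on generalizing v with
  | empty => simp
  | insert b s hb ih =>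
    -- `ad h - b h` kills the `b`-component and rescales the others by `χ h - b h`.
    have hshift : ∀ h : H, ∀ χ ∈ s, (χ h - b h) • v χ ∈ N := by
      intro h
      refine ih (fun χ hχ => (wtSpace H χ).smul_mem _ (hv χ (mem_insert_of_mem hχ))) ?_
      have hshift_sum : ∑ χ ∈ s, (χ h - b h) • v χ
          = ⁅(h : L), ∑ χ ∈ insert b s, v χ⁆ - b h • ∑ χ ∈ insert b s, v χ := by
        rw [lie_sum, smul_sum, ← sum_sub_distrib, sum_insert hb, hv b (mem_insert_self b s) h,
          sub_self, zero_add]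
        exact sum_congr rfl fun χ hχ => by rw [hv χ (mem_insert_of_mem hχ) h, sub_smul]
      rw [hshift_sum]
      exact N.sub_mem (hN h _ hsum) (N.smul_mem _ hsum)
    have hs : ∀ χ ∈ s, v χ ∈ N := fun χ hχ => by
      obtain ⟨h, hh⟩ := DFunLike.ne_iff.mp (ne_of_mem_of_not_mem hχ hb)
      simpa [inv_smul_smul₀ (sub_ne_zero.mpr hh)] using N.smul_mem (χ h - b h)⁻¹ (hshift h χ hχ)
    intro χ hχ
    rcases mem_insert.mp hχ with rfl | hχ
    · simpa [sum_insert hb] using N.sub_mem hsum (N.sum_mem hs)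
    · exact hs χ hχ

theorem iSupIndep_wtSpace : iSupIndep (wtSpace H) := by
  refine (iSupIndep_iff_finsetSum_eq_zero_imp_eq_zero _).mpr fun s v hv hsum => ?_
  have hbot : IsAdInvariant H ⊥ := fun h m hm => by
    rw [Submodule.mem_bot] at hm ⊢
    rw [hm, lie_zero]
  simpa using hbot.forall_mem_of_sum_mem hv (by simp [hsum])

theorem wtSpace_eq_bot_of_notMem {s : Finset (Module.Dual ℂ H)}
    (htop : ⨆ χ ∈ s, wtSpace H χ = ⊤) {γ : Module.Dual ℂ H} (hγ : γ ∉ s) :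
    wtSpace H γ = ⊥ := by
  have := iSupIndep_wtSpace.disjoint_biSup (y := (s : Set (Module.Dual ℂ H))) (mem_coe.not.mpr hγ)
  simpa [htop] using this

theorem IsAdInvariant.le_of_forall_inf_wtSpace_le {N P : Submodule ℂ L}
    (hN : IsAdInvariant H N) {s : Finset (Module.Dual ℂ H)}
    (htop : ⨆ χ ∈ s, wtSpace H χ = ⊤) (hP : ∀ χ ∈ s, N ⊓ wtSpace H χ ≤ P) : N ≤ P := by
  intro y hy
  obtain ⟨μ, rfl⟩ := (Submodule.mem_iSup_finset_iff_exists_sum (s := s) (wtSpace H) y).mp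
    (htop ▸ Submodule.mem_top)
  exact P.sum_mem fun χ hχ =>
    hP χ hχ ⟨hN.forall_mem_of_sum_mem (fun ψ _ => (μ ψ).2) hy χ hχ, (μ χ).2⟩

theorem lieNormalizer_inf_wtSpace_le {P : Submodule ℂ L} (hHP : H.toSubmodule ≤ P)
    {χ : Module.Dual ℂ H} (hχ : χ ≠ 0) : lieNormalizer P ⊓ wtSpace H χ ≤ P := by
  rintro v ⟨hvn, hv⟩
  obtain ⟨h, hh⟩ := DFunLike.ne_iff.mp hχ
  have hvh : ⁅v, (h : L)⁆ = -χ h • v := by rw [← lie_skew, hv h, neg_smul]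
  have := P.smul_mem (-χ h)⁻¹ (hvh ▸ hvn _ (hHP h.2))
  rwa [inv_smul_smul₀ (neg_ne_zero.mpr hh)] at this

theorem biSup_wtSpace_le_lieNormalizer {S T : Finset (Module.Dual ℂ H)}
    (htop : ⨆ χ ∈ T, wtSpace H χ = ⊤) (hS : ∀ χ ∈ S, ∀ ψ ∈ S, χ + ψ ∈ T → χ + ψ ∈ S) :
    ⨆ χ ∈ S, wtSpace H χ ≤ lieNormalizer (⨆ χ ∈ S, wtSpace H χ) := by
  refine iSup₂_le fun χ hχ v hv p hp => ?_
  obtain ⟨μ, rfl⟩ := (Submodule.mem_iSup_finset_iff_exists_sum _ _).mp hp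
  rw [lie_sum]
  refine Submodule.sum_mem _ fun ψ hψ => ?_
  have hvμ := lie_mem_wtSpace hv (μ ψ).2
  by_cases hT : χ + ψ ∈ T
  · exact le_biSup (wtSpace H) (hS χ hχ ψ hψ hT) hvμ
  · rw [wtSpace_eq_bot_of_notMem htop hT, Submodule.mem_bot] at hvμ
    rw [hvμ]
    exact Submodule.zero_mem _

end

theorem add_mem_insert_zero_of_parabolic {V : Type*} [AddCommGroup V] [Module ℂ V]
    [DecidableEq (Module.Dual ℂ V)] {R Ss : Finset (Module.Dual ℂ V)} (hSR : Ss ⊆ R) {x : V}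
    (hpar : ∀ α ∈ R, (α ∈ Ss ↔ 0 ≤ (α x).re)) :
    ∀ χ ∈ insert 0 Ss, ∀ ψ ∈ insert 0 Ss, χ + ψ ∈ insert 0 R → χ + ψ ∈ insert 0 Ss := by
  have hnonneg : ∀ χ ∈ insert 0 Ss, 0 ≤ (χ x).re := by
    intro χ hχ
    rcases mem_insert.mp hχ with rfl | hχ
    · simp
    · exact (hpar χ (hSR hχ)).mp hχ
  intro χ hχ ψ hψ hR
  rcases mem_insert.mp hR with h0 | hR
  · exact h0 ▸ mem_insert_self _ _
  · refine mem_insert_of_mem ((hpar _ hR).mpr ?_)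
    simpa using add_nonneg (hnonneg χ hχ) (hnonneg ψ hψ)

theorem stmt3_general {L : Type*} [LieRing L] [LieAlgebra ℂ L]
    (H : LieSubalgebra ℂ L)
    (R : Finset (Module.Dual ℂ H))
    (hH0 : H.toSubmodule ≤ wtSpace H 0)
    (hdecomp : (wtSpace H 0 ⊔ ⨆ α ∈ R, wtSpace (L := L) H α) = ⊤)
    (Ss : Finset (Module.Dual ℂ H)) (hSR : Ss ⊆ R)
    (x : H)
    (hpar : ∀ α ∈ R, (α ∈ Ss ↔ 0 ≤ (α x).re)) :
    ∀ y : L,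
      (∀ p ∈ (wtSpace H 0 ⊔ ⨆ α ∈ Ss, wtSpace (L := L) H α), ⁅y, p⁆ ∈
          (wtSpace H 0 ⊔ ⨆ α ∈ Ss, wtSpace (L := L) H α)) ↔
        y ∈ (wtSpace H 0 ⊔ ⨆ α ∈ Ss, wtSpace (L := L) H α) := by
  classical
  intro y
  set P := wtSpace H 0 ⊔ ⨆ α ∈ Ss, wtSpace (L := L) H α
  have hP : P = ⨆ χ ∈ insert 0 Ss, wtSpace H χ := (Finset.iSup_insert ..).symm
  have htop : ⨆ χ ∈ insert 0 R, wtSpace H χ = ⊤ := (Finset.iSup_insert ..).trans hdecomp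
  change y ∈ lieNormalizer P ↔ y ∈ P
  refine ⟨fun hy => ?_, fun hy => ?_⟩
  · have hP_inv : IsAdInvariant H P := hP ▸ isAdInvariant_biSup_wtSpace _
    refine hP_inv.lieNormalizer.le_of_forall_inf_wtSpace_le htop (fun χ _ => ?_) hy
    by_cases hχ : χ = 0
    · exact hχ ▸ inf_le_right.trans le_sup_left
    · exact lieNormalizer_inf_wtSpace_le (hH0.trans le_sup_left) hχ
  · rw [hP] at hy ⊢
    exact biSup_wtSpace_le_lieNormalizer htop (add_mem_insert_zero_of_parabolic hSR hpar) hy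

/-- Let `L = L₀ ⊕ ⊕_{α∈R} L_α` be the root decomposition of a weakly root
graded Lie algebra relative to the Cartan subalgebra `H` (all root spaces nonzero), and let
`𝔭 = L₀ ⊔ ⨆_{α∈Σ} L_α` be the parabolic subalgebra of the parabolic system
`Σ = {α ∈ R | α(x) ≥ 0}`. Then the normalizer of `𝔭` in `L` equals `𝔭`. -/
theorem stmt3 {L : Type*} [LieRing L] [LieAlgebra ℂ L]
    (H : LieSubalgebra ℂ L)
    (R : Finset (Module.Dual ℂ H)) (h0R : (0 : Module.Dual ℂ H) ∉ R)
    (hnz : ∀ α ∈ R, wtSpace (L := L) H α ≠ ⊥)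
    (hH0 : H.toSubmodule ≤ wtSpace H 0)
    (hdecomp : (wtSpace H 0 ⊔ ⨆ α ∈ R, wtSpace (L := L) H α) = ⊤)
    (Ss : Finset (Module.Dual ℂ H)) (hSR : Ss ⊆ R)
    (x : H) (hreal : ∀ α ∈ R, (α x).im = 0)
    (hpar : ∀ α ∈ R, (α ∈ Ss ↔ 0 ≤ (α x).re)) :
    ∀ y : L,
      (∀ p ∈ (wtSpace H 0 ⊔ ⨆ α ∈ Ss, wtSpace (L := L) H α), ⁅y, p⁆ ∈
          (wtSpace H 0 ⊔ ⨆ α ∈ Ss, wtSpace (L := L) H α)) ↔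
        y ∈ (wtSpace H 0 ⊔ ⨆ α ∈ Ss, wtSpace (L := L) H α) :=
  stmt3_general H R hH0 hdecomp Ss hSR x hpar
end

section
/- In the semidirect product 𝔤 = 𝔰𝔩₂(ℂ) ⋉ ℂ², formed with the standard representation of 𝔰𝔩₂(ℂ), let 𝔲 = 𝔤_α ⊕ 𝔤_{2α} be the sum of the weight spaces for the positive weights (where 𝔤_{2α} is the upper-triangular nilpotent part of 𝔰𝔩₂ and 𝔤_α = ℂe₁ ⊆ ℂ²). Then the normalizer of 𝔲 in 𝔤 strictly contains the parabolic subalgebra 𝔭 = 𝔥 ⊕ 𝔤_α ⊕ 𝔤_{2α}; in fact n_𝔤(𝔲) = 𝔤_{−α} ⊕ 𝔥 ⊕ 𝔤_α ⊕ 𝔤_{2α}. -/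
noncomputable section

/-- The Lie algebra `𝔰𝔩₂(ℂ) ⋉ ℂ²`, realized as the 3×3 complex matrices whose bottom
row vanishes and whose top-left 2×2 block is trace free. -/
def LS : Submodule ℂ (Matrix (Fin 3) (Fin 3) ℂ) where
  carrier := {A | (∀ j, A 2 j = 0) ∧ A 0 0 + A 1 1 = 0}
  add_mem' := by
    rintro a b ⟨ha1, ha2⟩ ⟨hb1, hb2⟩
    refine ⟨fun j => ?_, ?_⟩
    · simp [Matrix.add_apply, ha1 j, hb1 j]
    · simp only [Matrix.add_apply]
      linear_combination ha2 + hb2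
  zero_mem' := by
    refine ⟨fun j => rfl, ?_⟩
    simp
  smul_mem' := by
    rintro c a ⟨ha1, ha2⟩
    refine ⟨fun j => ?_, ?_⟩
    · simp [Matrix.smul_apply, ha1 j]
    · simp only [Matrix.smul_apply, smul_eq_mul]
      linear_combination c * ha2

/-- The coroot element `h = diag(1, -1, 0)`. -/
def h0 : Matrix (Fin 3) (Fin 3) ℂ := !![1, 0, 0; 0, -1, 0; 0, 0, 0]

/-- The `c`-eigenspace of `ad h0` inside `LS`. -/
def Wc (c : ℂ) : Submodule ℂ (Matrix (Fin 3) (Fin 3) ℂ) where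
  carrier := {A | A ∈ LS ∧ ⁅h0, A⁆ = c • A}
  add_mem' := by
    rintro a b ⟨ha1, ha2⟩ ⟨hb1, hb2⟩
    refine ⟨LS.add_mem ha1 hb1, ?_⟩
    have e : ⁅h0, a + b⁆ = ⁅h0, a⁆ + ⁅h0, b⁆ := by
      change h0 * (a + b) - (a + b) * h0 = (h0 * a - a * h0) + (h0 * b - b * h0)
      noncomm_ring
    rw [e, ha2, hb2, smul_add]
  zero_mem' := ⟨LS.zero_mem, by show h0 * 0 - 0 * h0 = c • 0; simp⟩
  smul_mem' := by
    rintro t a ⟨ha1, ha2⟩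
    refine ⟨LS.smul_mem t ha1, ?_⟩
    have e : ⁅h0, t • a⁆ = t • ⁅h0, a⁆ := by
      change h0 * (t • a) - (t • a) * h0 = t • (h0 * a - a * h0)
      rw [mul_smul_comm, smul_mul_assoc, smul_sub]
    rw [e, ha2]
    exact smul_comm t c a

/-!
Write `h0 = diagonal d` with `d = ![1, -1, 0]`; then `ad h0` multiplies the `(i, j)` entry of a
matrix by `dᵢ - dⱼ`. Hence each `Wc c` is cut out of `LS` by the vanishing of the entries of weight
`≠ c`, and is spanned by the matrix units of weight `c` (and `h0` when `c = 0`). So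
`𝔲 = Wc 1 ⊔ Wc 2` (`u` in lemma names) consists of the matrices of `LS` supported on the entries
`(0,1), (0,2)`, and `Wc (-1) ⊔ Wc 0 ⊔ Wc 1 ⊔ Wc 2` (`n`) of those with vanishing `(1,0)` entry.
An `A ∈ LS` normalizes `𝔲` exactly when `A₁₀ = 0`: the `(0,0)` entry of `⁅A, E₀₁⁆` is `-A₁₀`, and
for `A₁₀ = 0` the inclusion `⁅A, 𝔲⁆ ⊆ 𝔲` is a direct computation. Finally `E₁₂ ∈ Wc (-1)` lies
outside `𝔭`, its only nonzero entry having weight `-1`.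
-/

open Matrix

def h0Diag : Fin 3 → ℂ := ![1, -1, 0]

@[simp] theorem h0Diag_zero : h0Diag 0 = 1 := rfl

@[simp] theorem h0Diag_one : h0Diag 1 = -1 := rfl

@[simp] theorem h0Diag_two : h0Diag 2 = 0 := rfl

theorem lie_diagonal_apply {n R : Type*} [Fintype n] [DecidableEq n] [CommRing R] (d : n → R)
    (A : Matrix n n R) (i j : n) : ⁅diagonal d, A⁆ i j = (d i - d j) * A i j := by
  rw [Ring.lie_def, Matrix.sub_apply, diagonal_mul, mul_diagonal]
  ring

theorem h0_eq_diagonal : h0 = diagonal h0Diag := by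
  ext i j
  fin_cases i <;> fin_cases j <;> rfl

theorem Wc_le_LS (c : ℂ) : Wc c ≤ LS := fun _ hA => hA.1

theorem mem_Wc_iff {c : ℂ} {A : Matrix (Fin 3) (Fin 3) ℂ} :
    A ∈ Wc c ↔ A ∈ LS ∧ ∀ i j, (h0Diag i - h0Diag j) * A i j = c * A i j := by
  simp only [Wc, Submodule.mem_mk, AddSubmonoid.mem_mk, AddSubsemigroup.mem_mk, Set.mem_ofPred_eq,
    h0_eq_diagonal, ← ext_iff, lie_diagonal_apply, Matrix.smul_apply, smul_eq_mul]

theorem Wc_le_ker_entry {c : ℂ} (i j : Fin 3) (h : c ≠ h0Diag i - h0Diag j) :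
    Wc c ≤ LinearMap.ker (entryLinearMap ℂ ℂ i j) := by
  intro A hA
  have hA : (h0Diag i - h0Diag j - c) * A i j = 0 := by
    linear_combination (mem_Wc_iff.1 hA).2 i j
  exact (mul_eq_zero.1 hA).resolve_left (sub_ne_zero.2 h.symm)

theorem single_mem_Wc {c : ℂ} {i j : Fin 3} (hi : i ≠ 2) (hij : i ≠ j)
    (hc : h0Diag i - h0Diag j = c) : single i j 1 ∈ Wc c := by
  refine mem_Wc_iff.2 ⟨⟨fun k => single_apply_of_ne _ _ _ _ _ (by omega), ?_⟩, fun k l => ?_⟩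
  · grind
  · by_cases h : i = k ∧ j = l
    · obtain ⟨rfl, rfl⟩ := h
      rw [hc]
    · simp [single_apply_of_ne _ _ _ _ _ h]

theorem h0_mem_Wc_zero : h0 ∈ Wc 0 :=
  ⟨⟨fun j => by fin_cases j <;> rfl, by simp [h0]⟩, by rw [zero_smul, Ring.lie_def, sub_self]⟩

theorem eq_of_mem_LS {A : Matrix (Fin 3) (Fin 3) ℂ} (hA : A ∈ LS) :
    A = A 0 0 • h0 + A 0 1 • single 0 1 1 + A 0 2 • single 0 2 1 + A 1 0 • single 1 0 1 +
      A 1 2 • single 1 2 1 := by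
  obtain ⟨hrow, htr⟩ := hA
  ext i j
  fin_cases i <;> fin_cases j <;> simp [h0, hrow]
  linear_combination htr

theorem mem_u_iff {A : Matrix (Fin 3) (Fin 3) ℂ} :
    A ∈ Wc 1 ⊔ Wc 2 ↔ A ∈ LS ∧ A 0 0 = 0 ∧ A 1 0 = 0 ∧ A 1 2 = 0 := by
  constructor
  · intro hA
    have entry_eq_zero (i j : Fin 3) (h1 : 1 ≠ h0Diag i - h0Diag j)
        (h2 : 2 ≠ h0Diag i - h0Diag j) : A i j = 0 :=
      sup_le (Wc_le_ker_entry i j h1) (Wc_le_ker_entry i j h2) hA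
    exact ⟨sup_le (Wc_le_LS 1) (Wc_le_LS 2) hA, entry_eq_zero 0 0 (by norm_num) (by norm_num),
      entry_eq_zero 1 0 (by norm_num) (by norm_num), entry_eq_zero 1 2 (by norm_num) (by norm_num)⟩
  · rintro ⟨hLS, h00, h10, h12⟩
    rw [eq_of_mem_LS hLS, h00, h10, h12]
    simp only [zero_smul, zero_add, add_zero]
    exact add_mem
      (Submodule.mem_sup_right (Submodule.smul_mem _ _
        (single_mem_Wc (by decide) (by decide) (by norm_num))))
      (Submodule.mem_sup_left (Submodule.smul_mem _ _
        (single_mem_Wc (by decide) (by decide) (by norm_num))))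

theorem mem_n_iff {A : Matrix (Fin 3) (Fin 3) ℂ} :
    A ∈ Wc (-1) ⊔ Wc 0 ⊔ Wc 1 ⊔ Wc 2 ↔ A ∈ LS ∧ A 1 0 = 0 := by
  constructor
  · intro hA
    refine ⟨sup_le (sup_le (sup_le (Wc_le_LS _) (Wc_le_LS _)) (Wc_le_LS _)) (Wc_le_LS _) hA, ?_⟩
    exact sup_le (sup_le (sup_le (Wc_le_ker_entry 1 0 (by norm_num))
      (Wc_le_ker_entry 1 0 (by norm_num))) (Wc_le_ker_entry 1 0 (by norm_num)))
      (Wc_le_ker_entry 1 0 (by norm_num)) hA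
  · rintro ⟨hLS, h10⟩
    rw [eq_of_mem_LS hLS, h10, zero_smul, add_zero]
    refine add_mem (add_mem (add_mem ?_ ?_) ?_) ?_
    · exact Submodule.mem_sup_left <| Submodule.mem_sup_left <| Submodule.mem_sup_right <|
        Submodule.smul_mem _ _ h0_mem_Wc_zero
    · exact Submodule.mem_sup_right <| Submodule.smul_mem _ _ <|
        single_mem_Wc (by decide) (by decide) (by norm_num)
    · exact Submodule.mem_sup_left <| Submodule.mem_sup_right <| Submodule.smul_mem _ _ <|
        single_mem_Wc (by decide) (by decide) (by norm_num)
    · exact Submodule.mem_sup_left <| Submodule.mem_sup_left <| Submodule.mem_sup_left <|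
        Submodule.smul_mem _ _ <| single_mem_Wc (by decide) (by decide) (by norm_num)

theorem lie_mem_u_iff {A : Matrix (Fin 3) (Fin 3) ℂ} (hA : A ∈ LS) :
    (∀ B ∈ Wc 1 ⊔ Wc 2, ⁅A, B⁆ ∈ Wc 1 ⊔ Wc 2) ↔ A 1 0 = 0 := by
  obtain ⟨hArow, -⟩ := hA
  constructor
  · intro h
    have hE : single 0 1 1 ∈ Wc 1 ⊔ Wc 2 :=
      Submodule.mem_sup_right (single_mem_Wc (by decide) (by decide) (by norm_num))
    have h00 : ⁅A, single (0 : Fin 3) (1 : Fin 3) (1 : ℂ)⁆ 0 0 = -A 1 0 := by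
      simp [Ring.lie_def, mul_apply, Fin.sum_univ_three]
    exact neg_eq_zero.1 (h00 ▸ (mem_u_iff.1 (h _ hE)).2.1)
  · intro h10 B hB
    obtain ⟨⟨hBrow, hBtr⟩, hB00, hB10, hB12⟩ := mem_u_iff.1 hB
    have hB11 : B 1 1 = 0 := by linear_combination hBtr - hB00
    refine mem_u_iff.2 ⟨⟨fun j => ?_, ?_⟩, ?_, ?_, ?_⟩ <;>
      simp [Ring.lie_def, mul_apply, Fin.sum_univ_three, hArow, hBrow, hB00, hB10, hB11, hB12, h10]

/-- In `𝔤 = 𝔰𝔩₂(ℂ) ⋉ ℂ²`, with `𝔲 = 𝔤_α ⊕ 𝔤_{2α}`, the normalizer of `𝔲`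
in `𝔤` equals `𝔤_{-α} ⊕ 𝔥 ⊕ 𝔤_α ⊕ 𝔤_{2α}` (here `𝔥 = Wc 0`), and it strictly contains the
parabolic subalgebra `𝔭 = 𝔥 ⊕ 𝔤_α ⊕ 𝔤_{2α}`. -/
theorem stmt4 :
    (∀ A ∈ LS, ((∀ B ∈ Wc 1 ⊔ Wc 2, ⁅A, B⁆ ∈ Wc 1 ⊔ Wc 2) ↔
        A ∈ Wc (-1) ⊔ Wc 0 ⊔ Wc 1 ⊔ Wc 2)) ∧
      Wc 0 ⊔ Wc 1 ⊔ Wc 2 < Wc (-1) ⊔ Wc 0 ⊔ Wc 1 ⊔ Wc 2 := by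
  refine ⟨fun A hA => (lie_mem_u_iff hA).trans (mem_n_iff.trans (and_iff_right hA)).symm, ?_⟩
  have hE : single 1 2 1 ∈ Wc (-1) := single_mem_Wc (by decide) (by decide) (by norm_num)
  have hE_not_mem : single 1 2 1 ∉ Wc 0 ⊔ Wc 1 ⊔ Wc 2 := fun h => by
    have h12 := sup_le (sup_le (Wc_le_ker_entry 1 2 (by norm_num))
      (Wc_le_ker_entry 1 2 (by norm_num))) (Wc_le_ker_entry 1 2 (by norm_num)) h
    simp at h12
  exact SetLike.lt_iff_le_and_exists.2 ⟨sup_le_sup_right (sup_le_sup_right le_sup_right _) _,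
    _, Submodule.mem_sup_left (Submodule.mem_sup_left (Submodule.mem_sup_left hE)), hE_not_mem⟩

end
end

section
/- Let H ≅ (ℂ^×)^r be a complex torus and (π,V) a holomorphic Banach representation of H (a morphism of Banach–Lie groups π : H → GL(V)). Then the set 𝒫(V,𝔥) of 𝔥-weights occurring in V is finite, and V decomposes as the direct sum V = ⊕_{β∈𝔥*} V_β(𝔥) of finitely many weight spaces. -/
/-!
Restrict the `i`-th coordinate representation `ρ` of `ℂˣ` to the unit circle and let `P n` be its
Fourier coefficients; they commute with the whole torus action. Translation invariance of Haar
measure gives `ρ u * P n = u ^ n • P n` for `|u| = 1`, and the identity theorem extends this to all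
of `ℂˣ`, so `P n` maps into the `n`-th weight space. A weight vector of weight `n` forces
`2 ^ |n| ≤ max ‖ρ 2‖ ‖ρ 2⁻¹‖`, so only finitely many `P n` are nonzero; the circle representation is
then a trigonometric polynomial, and Fourier inversion at the identity gives `∑ P n = 1`. Splitting
`V` along these commuting decompositions of the identity one coordinate at a time yields the joint
weight spaces.
-/

/-- The weight space of a representation of the complex torus `(ℂˣ)^r` for the character
`z ↦ ∏ᵢ zᵢ^{βᵢ}`, `β ∈ ℤ^r`. -/
def torusWt {V : Type*} [NormedAddCommGroup V] [NormedSpace ℂ V] {r : ℕ}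
    (π : (Fin r → ℂˣ) →* (V →L[ℂ] V)) (β : Fin r → ℤ) : Submodule ℂ V where
  carrier := {v | ∀ z : Fin r → ℂˣ, π z v = (∏ i, (z i : ℂ) ^ β i) • v}
  add_mem' := by
    intro a b ha hb z
    rw [map_add, ha z, hb z, smul_add]
  zero_mem' := by intro z; simp
  smul_mem' := by
    intro c a ha z
    rw [map_smul, ha z]
    exact smul_comm c _ a

open AddCircle MeasureTheory Filter Topology

noncomputable section

section FourierCoeff

variable {T : ℝ}

theorem fourier_apply_add (n : ℤ) (x y : AddCircle T) :
    fourier n (x + y) = fourier n x * fourier n y := by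
  simp only [fourier_apply, smul_add, toCircle_add, Circle.coe_mul]

variable [Fact (0 < T)]

theorem Continuous.integrable_fourier_smul {E : Type*} [NormedAddCommGroup E] [NormedSpace ℂ E]
    {f : AddCircle T → E} (hf : Continuous f) (n : ℤ) :
    Integrable (fun t ↦ fourier n t • f t) haarAddCircle :=
  ((map_continuous (fourier n)).smul hf).integrable_of_hasCompactSupport
    (HasCompactSupport.of_compactSpace _)

theorem fourierCoeff_comp_add_left {E : Type*} [NormedAddCommGroup E] [NormedSpace ℂ E]
    (f : AddCircle T → E) (a : AddCircle T) (n : ℤ) :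
    fourierCoeff (fun t ↦ f (a + t)) n = fourier n a • fourierCoeff f n := by
  have hshift : ∀ t, fourier (-n) t • f (a + t) =
      fourier n a • (fourier (-n) (a + t) • f (a + t)) := fun t ↦ by
    rw [fourier_apply_add, smul_smul, ← mul_assoc, ← fourier_add, add_neg_cancel,
      fourier_zero, one_mul]
  simp only [fourierCoeff, hshift, integral_smul,
    integral_add_left_eq_self (fun t ↦ fourier (-n) t • f t)]

theorem sum_fourier_smul_fourierCoeff {E : Type*} [NormedAddCommGroup E] [NormedSpace ℂ E]
    [CompleteSpace E] {f : AddCircle T → E} (hf : Continuous f) {s : Finset ℤ}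
    (hs : ∀ n ∉ s, fourierCoeff f n = 0) (x : AddCircle T) :
    ∑ n ∈ s, fourier n x • fourierCoeff f n = f x := by
  refine (SeparatingDual.eq_iff_forall_dual_eq (R := ℂ)).2 fun φ ↦ ?_
  let g : C(AddCircle T, ℂ) := ⟨φ ∘ f, φ.continuous.comp hf⟩
  have hg : ∀ n, fourierCoeff g n = φ (fourierCoeff f n) := fun n ↦ by
    rw [fourierCoeff, fourierCoeff, ← φ.integral_comp_comm (hf.integrable_fourier_smul (-n))]
    simp only [map_smul]
    rfl
  have hgs : ∀ n ∉ s, fourierCoeff g n = 0 := fun n hn ↦ by rw [hg, hs n hn, map_zero]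
  have hgx : g x = ∑ n ∈ s, fourierCoeff g n • fourier n x :=
    (has_pointwise_sum_fourier_series_of_summable (summable_of_ne_finset_zero (s := s) hgs)
      x).unique (hasSum_sum_of_ne_finset_zero fun n hn ↦ by rw [hgs n hn, zero_smul])
  change _ = g x
  simp only [hgx, map_sum, map_smul, hg, smul_eq_mul, mul_comm]

variable {A : Type*} [NormedRing A] [NormedAlgebra ℂ A] [CompleteSpace A]

theorem mul_fourierCoeff {f : AddCircle T → A} (hf : Continuous f) (a : A) (n : ℤ) :
    a * fourierCoeff f n = fourierCoeff (fun t ↦ a * f t) n := by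
  have := (ContinuousLinearMap.mul ℂ A a).integral_comp_comm (hf.integrable_fourier_smul (-n))
  simp only [ContinuousLinearMap.mul_apply', mul_smul_comm] at this
  exact this.symm

theorem fourierCoeff_mul {f : AddCircle T → A} (hf : Continuous f) (a : A) (n : ℤ) :
    fourierCoeff f n * a = fourierCoeff (fun t ↦ f t * a) n := by
  have := ((ContinuousLinearMap.mul ℂ A).flip a).integral_comp_comm
    (hf.integrable_fourier_smul (-n))
  simp only [ContinuousLinearMap.flip_apply, ContinuousLinearMap.mul_apply', smul_mul_assoc]
    at this
  exact this.symm

theorem Commute.fourierCoeff_right {f : AddCircle T → A} (hf : Continuous f) {a : A}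
    (h : ∀ t, Commute a (f t)) (n : ℤ) : Commute a (fourierCoeff f n) := by
  simp only [Commute, SemiconjBy, mul_fourierCoeff hf, fourierCoeff_mul hf, (h _).eq]

theorem mul_fourierCoeff_of_map_add {f : AddCircle T → A} (hf : Continuous f)
    (hmul : ∀ a t, f (a + t) = f a * f t) (a : AddCircle T) (n : ℤ) :
    f a * fourierCoeff f n = fourier n a • fourierCoeff f n := by
  simp only [mul_fourierCoeff hf, ← hmul, fourierCoeff_comp_add_left]

end FourierCoeff

section UnitsRep

variable {V : Type*} [NormedAddCommGroup V] [NormedSpace ℂ V]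

def unitsWeightSpace (ρ : ℂˣ →* (V →L[ℂ] V)) (n : ℤ) : Submodule ℂ V :=
  ⨅ u : ℂˣ, Module.End.eigenspace (ρ u : V →ₗ[ℂ] V) ((u : ℂ) ^ n)

variable {ρ : ℂˣ →* (V →L[ℂ] V)} {n : ℤ} {v : V}

theorem mem_unitsWeightSpace :
    v ∈ unitsWeightSpace ρ n ↔ ∀ u : ℂˣ, ρ u v = (u : ℂ) ^ n • v := by
  simp [unitsWeightSpace]

theorem apply_mem_unitsWeightSpace {A : V →L[ℂ] V} (hA : ∀ u, Commute A (ρ u))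
    (hv : v ∈ unitsWeightSpace ρ n) : A v ∈ unitsWeightSpace ρ n := by
  rw [mem_unitsWeightSpace] at hv ⊢
  intro u
  rw [← mul_apply_eq_comp, ← (hA u).eq, mul_apply_eq_comp, hv, map_smul]

theorem ContinuousLinearMap.norm_le_opNorm_of_apply_eq_smul {A : V →L[ℂ] V} {c : ℂ}
    (hv : v ≠ 0) (h : A v = c • v) : ‖c‖ ≤ ‖A‖ :=
  le_of_mul_le_mul_right (by simpa [h, norm_smul] using A.le_opNorm v) (norm_pos_iff.2 hv)

def weightBound (ρ : ℂˣ →* (V →L[ℂ] V)) : ℕ :=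
  ⌈max ‖ρ (Units.mk0 2 two_ne_zero)‖ ‖ρ (Units.mk0 2 two_ne_zero)⁻¹‖⌉₊

theorem norm_zpow_le_of_mem_unitsWeightSpace (hv : v ∈ unitsWeightSpace ρ n) (hv0 : v ≠ 0)
    (u : ℂˣ) : ‖(u : ℂ)‖ ^ n ≤ ‖ρ u‖ := by
  rw [← norm_zpow]
  exact ContinuousLinearMap.norm_le_opNorm_of_apply_eq_smul hv0 (mem_unitsWeightSpace.1 hv u)

theorem natAbs_le_weightBound (hv : v ∈ unitsWeightSpace ρ n) (hv0 : v ≠ 0) :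
    n.natAbs ≤ weightBound ρ := by
  have key := norm_zpow_le_of_mem_unitsWeightSpace hv hv0
  have h2 : (2 : ℝ) ^ n.natAbs ≤
      max ‖ρ (Units.mk0 2 two_ne_zero)‖ ‖ρ (Units.mk0 2 two_ne_zero)⁻¹‖ := by
    rcases Int.natAbs_eq n with h | h
    · refine le_max_of_le_left ?_
      have := key (Units.mk0 2 two_ne_zero)
      rwa [Units.val_mk0, Complex.norm_two, h, zpow_natCast] at this
    · refine le_max_of_le_right ?_
      have := key (Units.mk0 2 two_ne_zero)⁻¹
      rwa [Units.val_inv_eq_inv_val, Units.val_mk0, norm_inv, Complex.norm_two, h, inv_zpow,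
        zpow_neg, inv_inv, zpow_natCast] at this
  have : (n.natAbs : ℝ) < 2 ^ n.natAbs := by exact_mod_cast Nat.lt_two_pow_self
  exact_mod_cast (this.trans_le (h2.trans (Nat.le_ceil _))).le

end UnitsRep

theorem Complex.frequently_nhdsNE_zero_of_forall_ofReal_mul {p : ℂ → Prop} {c : ℂ} (hc : c ≠ 0)
    (h : ∀ t : ℝ, p (t * c)) : ∃ᶠ ζ in 𝓝[≠] (0 : ℂ), p ζ := by
  have : Tendsto (fun t : ℝ ↦ (t : ℂ) * c) (𝓝[≠] 0) (𝓝[≠] 0) := by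
    refine tendsto_nhdsWithin_of_tendsto_nhds_of_eventually_within _ ?_ ?_
    · have hcont : Continuous fun t : ℝ ↦ (t : ℂ) * c := by fun_prop
      simpa using (hcont.tendsto 0).mono_left nhdsWithin_le_nhds
    · filter_upwards [self_mem_nhdsWithin] with t ht
      simpa [hc] using ht
  exact this.frequently (Frequently.of_forall h)

section HolomorphicRep

variable {V : Type*} [NormedAddCommGroup V] [NormedSpace ℂ V]

def IsHolomorphicRep (ρ : ℂˣ →* (V →L[ℂ] V)) : Prop :=
  ∃ G : ℂ → V →L[ℂ] V, AnalyticOnNhd ℂ G {z | z ≠ 0} ∧ ∀ u : ℂˣ, G u = ρ u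

def circleRestrict (ρ : ℂˣ →* (V →L[ℂ] V)) (x : UnitAddCircle) : V →L[ℂ] V :=
  ρ (Circle.toUnits (toCircle x))

def weightProj (ρ : ℂˣ →* (V →L[ℂ] V)) (n : ℤ) : V →L[ℂ] V :=
  fourierCoeff (circleRestrict ρ) n

variable {ρ : ℂˣ →* (V →L[ℂ] V)}

theorem circleRestrict_add (x y : UnitAddCircle) :
    circleRestrict ρ (x + y) = circleRestrict ρ x * circleRestrict ρ y := by
  simp only [circleRestrict, toCircle_add, map_mul]

theorem circleRestrict_coe {G : ℂ → V →L[ℂ] V} (hGρ : ∀ u : ℂˣ, G u = ρ u) (t : ℝ) :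
    circleRestrict ρ t = G (Complex.exp (t * (2 * Real.pi * Complex.I))) := by
  rw [circleRestrict, toCircle_apply_mk, ← hGρ]
  congr 1
  simp only [Circle.toUnits_apply, Units.val_mk0, Circle.coe_exp]
  push_cast
  ring_nf

namespace IsHolomorphicRep

theorem continuous_circleRestrict (hρ : IsHolomorphicRep ρ) : Continuous (circleRestrict ρ) := by
  obtain ⟨G, hG, hGρ⟩ := hρ
  have : circleRestrict ρ = fun x ↦ G (toCircle x) := funext fun x ↦ (hGρ _).symm
  rw [this]
  exact hG.continuousOn.comp_continuous (continuous_subtype_val.comp continuous_toCircle)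
    fun x ↦ Circle.coe_ne_zero _

variable [CompleteSpace V]

theorem mul_weightProj (hρ : IsHolomorphicRep ρ) (n : ℤ) (u : ℂˣ) :
    ρ u * weightProj ρ n = (u : ℂ) ^ n • weightProj ρ n := by
  have hcircle : ∀ x, circleRestrict ρ x * weightProj ρ n = fourier n x • weightProj ρ n :=
    mul_fourierCoeff_of_map_add hρ.continuous_circleRestrict circleRestrict_add (n := n)
  obtain ⟨G, hG, hGρ⟩ := hρ
  -- Both sides are entire in `ζ`, and on `2πiℝ` the identity is `hcircle`.
  have hexp : (fun ζ ↦ G (Complex.exp ζ) * weightProj ρ n) =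
      fun ζ ↦ Complex.exp (n * ζ) • weightProj ρ n := by
    refine AnalyticOnNhd.eq_of_frequently_eq (z₀ := 0)
      (fun ζ _ ↦ ((hG _ (Complex.exp_ne_zero ζ)).comp analyticAt_cexp).mul analyticAt_const)
      (fun ζ _ ↦ (analyticAt_cexp.comp (analyticAt_const.mul analyticAt_id)).smul
        analyticAt_const)
      (Complex.frequently_nhdsNE_zero_of_forall_ofReal_mul (c := 2 * Real.pi * Complex.I)
        (by simp) fun t ↦ ?_)
    have := hcircle t
    rw [circleRestrict_coe hGρ, fourier_coe_apply, Complex.ofReal_one, div_one] at this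
    convert this using 3
    ring
  have := congrFun hexp (Complex.log u)
  rwa [Complex.exp_log u.ne_zero, Complex.exp_int_mul, Complex.exp_log u.ne_zero, hGρ] at this

theorem weightProj_apply_mem (hρ : IsHolomorphicRep ρ) (n : ℤ) (v : V) :
    weightProj ρ n v ∈ unitsWeightSpace ρ n :=
  mem_unitsWeightSpace.2 fun u ↦ by
    rw [← mul_apply_eq_comp, hρ.mul_weightProj, smul_apply]

theorem weightProj_eq_zero (hρ : IsHolomorphicRep ρ) {n : ℤ} (hn : weightBound ρ < n.natAbs) :
    weightProj ρ n = 0 := by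
  ext v
  by_contra hv
  exact hn.not_ge (natAbs_le_weightBound (hρ.weightProj_apply_mem n v) hv)

theorem sum_weightProj (hρ : IsHolomorphicRep ρ) {N : ℕ} (hN : weightBound ρ ≤ N) :
    ∑ n ∈ Finset.Icc (-N : ℤ) N, weightProj ρ n = 1 := by
  have := sum_fourier_smul_fourierCoeff hρ.continuous_circleRestrict
    (s := Finset.Icc (-N : ℤ) N) (fun n hn ↦ hρ.weightProj_eq_zero (by simp at hn; omega)) 0
  simpa [fourier_eval_zero, circleRestrict, weightProj] using this

theorem le_iSup_inf_unitsWeightSpace (hρ : IsHolomorphicRep ρ) {N : ℕ} (hN : weightBound ρ ≤ N)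
    {U : Submodule ℂ V} (hU : ∀ n, ∀ v ∈ U, weightProj ρ n v ∈ U) :
    U ≤ ⨆ n ∈ Finset.Icc (-N : ℤ) N, U ⊓ unitsWeightSpace ρ n := by
  intro v hv
  have hsum : ∑ n ∈ Finset.Icc (-N : ℤ) N, weightProj ρ n v = v := by
    rw [← sum_apply, hρ.sum_weightProj hN, one_apply_eq_self]
  rw [← hsum]
  exact Submodule.sum_mem_biSup fun n _ ↦ ⟨hU n v hv, hρ.weightProj_apply_mem n v⟩

end IsHolomorphicRep

end HolomorphicRep

section Torus

variable {V : Type*} [NormedAddCommGroup V] [NormedSpace ℂ V] {r : ℕ}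

def coordRep (π : (Fin r → ℂˣ) →* (V →L[ℂ] V)) (i : Fin r) : ℂˣ →* (V →L[ℂ] V) :=
  π.comp (MonoidHom.mulSingle (fun _ ↦ ℂˣ) i)

variable {π : (Fin r → ℂˣ) →* (V →L[ℂ] V)}

theorem isHolomorphicRep_coordRep {F : (Fin r → ℂ) → V →L[ℂ] V}
    (hF : AnalyticOnNhd ℂ F {z | ∀ i, z i ≠ 0})
    (hFπ : ∀ z : Fin r → ℂˣ, F (fun i ↦ (z i : ℂ)) = π z) (i : Fin r) :
    IsHolomorphicRep (coordRep π i) := by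
  refine ⟨fun t ↦ F (Function.update 1 i t), hF.comp ?_ ?_, fun u ↦ ?_⟩
  · refine AnalyticOnNhd.pi fun j ↦ ?_
    by_cases h : j = i
    · subst h; simpa using analyticOnNhd_id
    · simpa [h] using analyticOnNhd_const
  · intro t ht j
    by_cases h : j = i
    · subst h; simpa using ht
    · simp [h]
  · rw [coordRep, MonoidHom.comp_apply, ← hFπ]
    dsimp only
    congr 1
    funext j
    by_cases h : j = i
    · subst h; simp
    · simp [h]

theorem torusWt_eq_iInf_unitsWeightSpace (β : Fin r → ℤ) :
    torusWt π β = ⨅ i, unitsWeightSpace (coordRep π i) (β i) := by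
  ext v
  simp only [Submodule.mem_iInf, mem_unitsWeightSpace, coordRep, MonoidHom.comp_apply,
    MonoidHom.mulSingle_apply]
  constructor
  · intro hv i u
    rw [hv]
    congr 1
    rw [Finset.prod_eq_single i (fun j _ hj ↦ by simp [hj]) (by simp)]
    simp
  · intro hv z
    have hJ : ∀ J : Finset (Fin r),
        π (∏ i ∈ J, Pi.mulSingle i (z i)) v = (∏ i ∈ J, (z i : ℂ) ^ β i) • v := by
      intro J
      induction J using Finset.induction_on with
      | empty => simp
      | insert j J hj ih =>
        rw [Finset.prod_insert hj, Finset.prod_insert hj, map_mul, mul_apply_eq_comp, ih,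
          map_smul, hv, smul_smul, mul_comm]
    simpa [Finset.univ_prod_mulSingle] using hJ Finset.univ

variable [CompleteSpace V]

theorem IsHolomorphicRep.commute_weightProj_coordRep {j : Fin r}
    (hρ : IsHolomorphicRep (coordRep π j)) (z : Fin r → ℂˣ) (n : ℤ) : Commute (π z) (weightProj (coordRep π j) n) :=
  Commute.fourierCoeff_right hρ.continuous_circleRestrict
    (fun x ↦ (Commute.all z (Pi.mulSingle j (Circle.toUnits (toCircle x)))).map π) n

theorem iSup_iInf_unitsWeightSpace_coordRep_eq_top (hρ : ∀ i, IsHolomorphicRep (coordRep π i))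
    {N : ℕ} (hN : ∀ i, weightBound (coordRep π i) ≤ N) (J : Finset (Fin r)) :
    ⨆ β ∈ Fintype.piFinset fun _ ↦ Finset.Icc (-N : ℤ) N,
      ⨅ i ∈ J, unitsWeightSpace (coordRep π i) (β i) = ⊤ := by
  induction J using Finset.induction_on with
  | empty =>
    refine eq_top_iff.2 (le_iSup₂_of_le 0 ?_ (by simp))
    simp
  | insert j J _ ih =>
    refine eq_top_iff.2 (ih ▸ iSup₂_le fun β hβ ↦ ?_)
    have hU : ∀ n, ∀ v ∈ ⨅ i ∈ J, unitsWeightSpace (coordRep π i) (β i),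
        weightProj (coordRep π j) n v ∈ ⨅ i ∈ J, unitsWeightSpace (coordRep π i) (β i) := by
      simp only [Submodule.mem_iInf]
      exact fun n v hv i hi ↦ apply_mem_unitsWeightSpace
        (fun u ↦ ((hρ j).commute_weightProj_coordRep (Pi.mulSingle i u) n).symm) (hv i hi)
    refine ((hρ j).le_iSup_inf_unitsWeightSpace (hN j) hU).trans (iSup₂_le fun n hn ↦ ?_)
    refine le_iSup₂_of_le (Function.update β j n) ?_ (le_iInf₂ fun i hi ↦ ?_)
    · simp only [Fintype.mem_piFinset] at hβ ⊢
      intro i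
      by_cases h : i = j
      · subst h; simpa using hn
      · simpa [h] using hβ i
    · by_cases h : i = j
      · subst h; simp
      · rw [Function.update_of_ne h]
        exact inf_le_left.trans (iInf₂_le i (Finset.mem_of_mem_insert_of_ne hi h))

end Torus

/-- Every holomorphic Banach representation `π` of the complex torus
`H = (ℂˣ)^r` has only finitely many weights, and `V` is the direct sum of the
corresponding weight spaces. -/
theorem stmt16 {V : Type*} [NormedAddCommGroup V] [NormedSpace ℂ V] [CompleteSpace V]
    {r : ℕ} (π : (Fin r → ℂˣ) →* (V →L[ℂ] V))
    (hhol : ∃ F : (Fin r → ℂ) → (V →L[ℂ] V),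
      AnalyticOnNhd ℂ F {z | ∀ i, z i ≠ 0} ∧
      ∀ z : Fin r → ℂˣ, F (fun i => (z i : ℂ)) = π z) :
    ∃ S : Finset (Fin r → ℤ),
      (∀ β : Fin r → ℤ, torusWt π β ≠ ⊥ → β ∈ S) ∧
      (⨆ β ∈ S, torusWt π β) = ⊤ := by
  obtain ⟨F, hF, hFπ⟩ := hhol
  have hρ := isHolomorphicRep_coordRep hF hFπ
  set N := Finset.univ.sup fun i ↦ weightBound (coordRep π i)
  have hN : ∀ i, weightBound (coordRep π i) ≤ N := fun i ↦
    Finset.le_sup (f := fun i ↦ weightBound (coordRep π i)) (Finset.mem_univ i)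
  refine ⟨Fintype.piFinset fun _ ↦ Finset.Icc (-N : ℤ) N, fun β hβ ↦ ?_, ?_⟩
  · obtain ⟨v, hv, hv0⟩ := Submodule.exists_mem_ne_zero_of_ne_bot hβ
    rw [torusWt_eq_iInf_unitsWeightSpace, Submodule.mem_iInf] at hv
    simp only [Fintype.mem_piFinset, Finset.mem_Icc]
    intro i
    have := (natAbs_le_weightBound (hv i) hv0).trans (hN i)
    omega
  · simpa [torusWt_eq_iInf_unitsWeightSpace] using
      iSup_iInf_unitsWeightSpace_coordRep_eq_top hρ hN Finset.univ
end
end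

section
/- Let (ρ_E,E) be an irreducible continuous Banach representation of the parabolic subalgebra 𝔭 = 𝔲 ⋊ 𝔩 of a weakly root graded Banach–Lie algebra, decomposing into finitely many 𝔥-weight spaces. Then 𝔲 acts trivially on E. -/
attribute [local instance 100] LieRing.ofAssociativeRing

theorem Set.Finite.exists_add_notMem_of_pos {V : Type*} [AddCommMonoid V] {S : Set V}
    (hS : S.Finite) (hne : S.Nonempty) (φ : V →+ ℝ) :
    ∃ μ ∈ S, ∀ α, 0 < φ α → μ + α ∉ S := by
  obtain ⟨μ, hμ, hmax⟩ := hS.exists_maximalFor φ S hne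
  refine ⟨μ, hμ, fun α hα hμα => ?_⟩
  have := hmax hμα (by rw [map_add]; linarith)
  rw [map_add] at this
  linarith

namespace LieHom

variable {K A M : Type*} [CommRing K] [LieRing A] [LieAlgebra K A] [AddCommGroup M]
  [Module K M] (ρ : A →ₗ⁅K⁆ Module.End K M)

theorem apply_lie_apply (a b : A) (v : M) : ρ ⁅a, b⁆ v = ρ a (ρ b v) - ρ b (ρ a v) := by
  rw [ρ.map_lie, Ring.lie_def]
  rfl

theorem apply_apply_eq_smul_of_lie_eq_smul {a z : A} {c d : K} {v : M} (hz : ⁅a, z⁆ = c • z)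
    (hv : ρ a v = d • v) : ρ a (ρ z v) = (d + c) • ρ z v := by
  have h := apply_lie_apply ρ a z v
  rw [hz, hv, map_smul, LinearMap.smul_apply, map_smul, eq_sub_iff_add_eq] at h
  rw [← h, add_smul, add_comm]

def invariants (I : Set A) : Submodule K M := ⨅ y ∈ I, LinearMap.ker (ρ y)

theorem mem_invariants {I : Set A} {v : M} : v ∈ ρ.invariants I ↔ ∀ y ∈ I, ρ y v = 0 := by
  simp [invariants]

theorem apply_mem_invariants {I : Set A} (hI : ∀ y z : A, z ∈ I → ⁅y, z⁆ ∈ I) (y : A) {v : M}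
    (hv : v ∈ ρ.invariants I) : ρ y v ∈ ρ.invariants I := by
  rw [mem_invariants] at hv ⊢
  intro z hz
  have h := apply_lie_apply ρ y z v
  rwa [hv _ (hI y z hz), hv z hz, map_zero, zero_sub, eq_comm, neg_eq_zero] at h

theorem isClosed_invariants [TopologicalSpace M] [T1Space M] {I : Set A}
    (hρ : ∀ y ∈ I, Continuous (ρ y)) : IsClosed (ρ.invariants I : Set M) := by
  simp only [invariants, Submodule.coe_iInf]
  exact isClosed_biInter fun y hy => isClosed_singleton.preimage (hρ y hy)

end LieHom

theorem LieSubalgebra.apply_eq_zero_of_mem_iSup {K L M ι : Type*} [CommRing K] [LieRing L]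
    [LieAlgebra K L] [AddCommGroup M] [Module K M] {P : LieSubalgebra K L}
    (ρ : P →ₗ⁅K⁆ Module.End K M) (v : M) {s : Set ι} {N : ι → Submodule K L}
    (hN : ∀ i ∈ s, N i ≤ P.toSubmodule) (h : ∀ i ∈ s, ∀ y : P, (y : L) ∈ N i → ρ y v = 0)
    {y : P} (hy : (y : L) ∈ ⨆ i ∈ s, N i) : ρ y v = 0 := by
  have hle : ⨆ i ∈ s, N i ≤ (LinearMap.ker (ρ.toLinearMap.flip v)).map P.toSubmodule.subtype :=
    iSup₂_le fun i hi z hz => ⟨⟨z, hN i hi hz⟩, h i hi _ hz, rfl⟩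
  obtain ⟨z, hz, hzy⟩ := hle hy
  rwa [show z = y from Subtype.ext hzy] at hz

theorem stmt17_general {L : Type*} [LieRing L] [LieAlgebra ℂ L]
    (H : LieSubalgebra ℂ L)
    (Sp : Finset (Module.Dual ℂ H))
    (x : H) (hx : ∀ α ∈ Sp, 1 ≤ (α x).re)
    (P : LieSubalgebra ℂ L)
    (hHP : ∀ h : H, (h : L) ∈ P)
    (hUP : (⨆ α ∈ Sp, wtSpace (L := L) H α) ≤ P.toSubmodule)
    -- 𝔲 is an ideal of 𝔭
    (hideal : ∀ y u : L, y ∈ P → u ∈ (⨆ α ∈ Sp, wtSpace (L := L) H α) →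
      ⁅y, u⁆ ∈ (⨆ α ∈ Sp, wtSpace (L := L) H α))
    {E : Type*} [NormedAddCommGroup E] [NormedSpace ℂ E] [Nontrivial E]
    (ρ : P →ₗ⁅ℂ⁆ Module.End ℂ E)
    (hcont : ∀ y : P, Continuous (ρ y))
    -- irreducibility: no proper nonzero closed invariant subspace
    (hirr : ∀ W : Submodule ℂ E, IsClosed (W : Set E) →
      (∀ y : P, ∀ v ∈ W, ρ y v ∈ W) → W = ⊥ ∨ W = ⊤)
    -- E decomposes into finitely many H-weight spaces
    (Ewt : Module.Dual ℂ H → Submodule ℂ E)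
    (hEwt : ∀ μ v, v ∈ Ewt μ ↔ ∀ h : H, ρ ⟨(h : L), hHP h⟩ v = μ h • v)
    (hEfin : {μ | Ewt μ ≠ ⊥}.Finite)
    (hEsup : (⨆ μ, Ewt μ) = ⊤) :
    ∀ y : P, (y : L) ∈ (⨆ α ∈ Sp, wtSpace (L := L) H α) → ρ y = 0 := by
  set 𝔲 : Set P := {y | (y : L) ∈ ⨆ α ∈ Sp, wtSpace (L := L) H α}
  have hweight : ∃ μ, Ewt μ ≠ ⊥ := by
    by_contra! h
    exact bot_ne_top ((iSup_eq_bot.2 h).symm.trans hEsup)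
  obtain ⟨μ, hμ, hmax⟩ := hEfin.exists_add_notMem_of_pos hweight
    (Complex.reAddGroupHom.comp (Module.Dual.eval ℂ H x).toAddMonoidHom)
  obtain ⟨v, hv, hv0⟩ := Submodule.exists_mem_ne_zero_of_ne_bot hμ
  have hroot : ∀ α ∈ Sp, ∀ y : P, (y : L) ∈ wtSpace H α → ρ y v = 0 := by
    intro α hα y hy
    have hshift : ρ y v ∈ Ewt (μ + α) := (hEwt _ _).2 fun h =>
      ρ.apply_apply_eq_smul_of_lie_eq_smul (Subtype.ext (hy h)) ((hEwt μ v).1 hv h)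
    have hzero : Ewt (μ + α) = ⊥ := not_not.1 (hmax α (by simpa using (hx α hα).trans_lt' one_pos))
    simpa [hzero] using hshift
  have hv𝔲 : v ∈ ρ.invariants 𝔲 := ρ.mem_invariants.2 fun y hy =>
    LieSubalgebra.apply_eq_zero_of_mem_iSup ρ v
      (fun α hα => (le_iSup₂ (f := fun α (_ : α ∈ Sp) => wtSpace H α) α hα).trans hUP) hroot hy
  rcases hirr _ (ρ.isClosed_invariants fun y _ => hcont y)
    (ρ.apply_mem_invariants fun y z hz => hideal y z y.2 hz) with hbot | htop
  · exact absurd (hbot ▸ hv𝔲) (by simpa using hv0)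
  · exact fun y hy => LinearMap.ext fun w => ρ.mem_invariants.1 (htop ▸ Submodule.mem_top) y hy

/-- Let `(ρ, E)` be an irreducible continuous Banach representation of
the parabolic subalgebra `P = 𝔲 ⋊ 𝔩` of a weakly root graded Banach–Lie algebra,
decomposing into finitely many `H`-weight spaces.  Then the nilpotent ideal
`𝔲 = ⊕_{α ∈ Σ⁺} L_α` acts trivially on `E`. -/
theorem stmt17 {L : Type*} [LieRing L] [LieAlgebra ℂ L]
    [NormedAddCommGroup L] [NormedSpace ℂ L] [CompleteSpace L]
    (H : LieSubalgebra ℂ L)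
    (R Ss Sp : Finset (Module.Dual ℂ H)) (hSR : Ss ⊆ R)
    (hSp : ∀ α, α ∈ Sp ↔ α ∈ Ss ∧ -α ∉ Ss)
    (x : H) (hx : ∀ α ∈ Sp, 1 ≤ (α x).re)
    (P : LieSubalgebra ℂ L)
    (hP : P.toSubmodule = wtSpace H 0 ⊔ ⨆ α ∈ Ss, wtSpace H α)
    (hHP : ∀ h : H, (h : L) ∈ P)
    (hUP : (⨆ α ∈ Sp, wtSpace (L := L) H α) ≤ P.toSubmodule)
    -- 𝔲 is an ideal of 𝔭
    (hideal : ∀ y u : L, y ∈ P → u ∈ (⨆ α ∈ Sp, wtSpace (L := L) H α) →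
      ⁅y, u⁆ ∈ (⨆ α ∈ Sp, wtSpace (L := L) H α))
    {E : Type*} [NormedAddCommGroup E] [NormedSpace ℂ E] [CompleteSpace E] [Nontrivial E]
    (ρ : P →ₗ⁅ℂ⁆ Module.End ℂ E)
    (hcont : ∀ y : P, Continuous (ρ y))
    -- irreducibility: no proper nonzero closed invariant subspace
    (hirr : ∀ W : Submodule ℂ E, IsClosed (W : Set E) →
      (∀ y : P, ∀ v ∈ W, ρ y v ∈ W) → W = ⊥ ∨ W = ⊤)
    -- E decomposes into finitely many H-weight spaces
    (Ewt : Module.Dual ℂ H → Submodule ℂ E)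
    (hEwt : ∀ μ v, v ∈ Ewt μ ↔ ∀ h : H, ρ ⟨(h : L), hHP h⟩ v = μ h • v)
    (hEfin : {μ | Ewt μ ≠ ⊥}.Finite)
    (hEsup : (⨆ μ, Ewt μ) = ⊤) :
    ∀ y : P, (y : L) ∈ (⨆ α ∈ Sp, wtSpace (L := L) H α) → ρ y = 0 :=
  stmt17_general H Sp x hx P hHP hUP hideal ρ hcont hirr Ewt hEwt hEfin hEsup
end
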